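/- Let G be a simple graph, v a vertex, and k a positive integer. Let H be a subgraph of G that is distance-determined from v, meaning there exist a set S ⊆ ℕ and a symmetric predicate P on ℕ × ℕ such that a vertex u of G belongs to H iff u is reachable from v and d(v,u) ∈ S, and an edge {i,j} of G belongs to H iff P(d(v,i), d(v,j)) holds. If H contains D_k(v) and is contained in L_k(v) (as subgraphs), then H = D_k(v) or H = L_k(v). -/

import Mathlib

/-!
A closed walk at `v` through the edge `{i, j}` has length at least `d(v, i) + d(v, j) + 1`,
and a geodesic to `i`, the edge, and a geodesic back from `j` realise this bound. Hence
`D_k(v)` and `L_k(v)` have the same vertices, and an edge of `L_k(v)` that is not in `D_k(v)`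
joins two vertices at distance exactly `k` from `v` (adjacent vertices have distances differing
by at most one, and here the two distances add up to `2k`). A distance-determined `H` therefore
contains either all of these extra edges or none of them, according to whether `P k k` holds.
-/

/-- The subgraph of `G` formed by all vertices and edges appearing in some closed walk
at `v` of length at most `m`. -/
def walkSubgraph {V : Type*} (G : SimpleGraph V) (v : V) (m : ℕ) : G.Subgraph where
  verts := {u | ∃ p : G.Walk v v, p.length ≤ m ∧ u ∈ p.support}
  Adj i j := ∃ p : G.Walk v v, p.length ≤ m ∧ s(i, j) ∈ p.edges
  adj_sub := fun ⟨p, _, he⟩ => p.adj_of_mem_edges he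
  edge_vert := fun ⟨p, hl, he⟩ => ⟨p, hl, p.fst_mem_support_of_mem_edges he⟩
  symm := ⟨fun i j ⟨p, hl, he⟩ => ⟨p, hl, by rwa [Sym2.eq_swap] at he⟩⟩

/-- `H` is distance-determined from `v`: there are a set `S ⊆ ℕ` and a symmetric
predicate `P` on `ℕ × ℕ` such that a vertex `u` belongs to `H` iff `u` is reachable
from `v` and `d(v, u) ∈ S`, and an edge `{i, j}` of `G` belongs to `H` iff
`P (d(v, i)) (d(v, j))` holds. -/
def DistanceDetermined {V : Type*} {G : SimpleGraph V} (H : G.Subgraph) (v : V) : Prop :=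
  ∃ (S : Set ℕ) (P : ℕ → ℕ → Prop), (∀ a b, P a b ↔ P b a) ∧
    (∀ u, u ∈ H.verts ↔ G.Reachable v u ∧ G.dist v u ∈ S) ∧
    (∀ i j, G.Adj i j → (H.Adj i j ↔ P (G.dist v i) (G.dist v j)))

namespace SimpleGraph

variable {V : Type*} {G : SimpleGraph V}

theorem Subgraph.eq_or_eq_of_le_of_le {A H B : G.Subgraph} (hAH : A ≤ H) (hHB : H ≤ B)
    (hverts : B.verts ⊆ A.verts)
    (hedges : (∀ i j, B.Adj i j → ¬A.Adj i j → H.Adj i j) ∨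
      (∀ i j, B.Adj i j → ¬A.Adj i j → ¬H.Adj i j)) :
    H = A ∨ H = B := by
  rcases hedges with hall | hnone
  · refine .inr (le_antisymm hHB ⟨fun u hu => hAH.1 (hverts hu), fun i j hij => ?_⟩)
    by_cases hA : A.Adj i j
    · exact hAH.2 hA
    · exact hall i j hij hA
  · have hHA : H ≤ A := ⟨fun u hu => hverts (hHB.1 hu), fun i j hij =>
      by_contra fun hA => hnone i j (hHB.2 hij) hA hij⟩
    exact .inl (le_antisymm hHA hAH)

namespace Walk

theorem IsSubwalk.dist_add_length_add_dist_le {u v u' v' : V} {p : G.Walk u' v'}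
    {q : G.Walk u v} (h : p.IsSubwalk q) :
    G.dist u u' + p.length + G.dist v' v ≤ q.length := by
  obtain ⟨ru, rv, rfl⟩ := h
  have := G.dist_le ru
  have := G.dist_le rv
  simp only [length_append]
  omega

theorem dist_add_dist_add_one_le_length_of_mem_edges {v i j : V} (p : G.Walk v v)
    (he : s(i, j) ∈ p.edges) : G.dist v i + G.dist v j + 1 ≤ p.length := by
  have hji : G.dist j v = G.dist v j := G.dist_comm
  have hij : G.dist i v = G.dist v i := G.dist_comm
  rcases (isSubwalk_toWalk_iff_mem_edges (p.adj_of_mem_edges he)).mpr he with h | h <;>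
  · have := h.dist_add_length_add_dist_le
    simp only [length_cons, length_nil] at this
    omega

end Walk

variable {v : V} {m : ℕ}

theorem mem_walkSubgraph_verts_iff {u : V} :
    u ∈ (walkSubgraph G v m).verts ↔ G.Reachable v u ∧ 2 * G.dist v u ≤ m := by
  constructor
  · rintro ⟨p, hl, hu⟩
    obtain ⟨q, r, rfl⟩ := Walk.mem_support_iff_exists_append.mp hu
    have hq := G.dist_le q
    have hr := G.dist_le r
    rw [Walk.length_append] at hl
    rw [G.dist_comm] at hr
    exact ⟨⟨q⟩, by omega⟩
  · rintro ⟨hr, hle⟩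
    obtain ⟨r, hr⟩ := hr.exists_walk_length_eq_dist
    refine ⟨r.append r.reverse, ?_, by simp⟩
    rw [Walk.length_append, Walk.length_reverse, hr]
    omega

theorem walkSubgraph_adj_iff {i j : V} :
    (walkSubgraph G v m).Adj i j ↔
      G.Adj i j ∧ G.Reachable v i ∧ G.Reachable v j ∧ G.dist v i + G.dist v j + 1 ≤ m := by
  constructor
  · intro h
    have hi := (mem_walkSubgraph_verts_iff.mp h.fst_mem).1
    have hj := (mem_walkSubgraph_verts_iff.mp h.snd_mem).1
    obtain ⟨p, hl, he⟩ := h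
    have := p.dist_add_dist_add_one_le_length_of_mem_edges he
    exact ⟨p.adj_of_mem_edges he, hi, hj, by omega⟩
  · rintro ⟨hadj, hi, hj, hle⟩
    obtain ⟨ri, hri⟩ := hi.exists_walk_length_eq_dist
    obtain ⟨rj, hrj⟩ := hj.exists_walk_length_eq_dist
    refine ⟨ri.append (.cons hadj rj.reverse), ?_, ?_⟩
    · rw [Walk.length_append, Walk.length_cons, Walk.length_reverse, hri, hrj]
      omega
    · simp

theorem walkSubgraph_verts_two_mul_add_one (k : ℕ) :
    (walkSubgraph G v (2 * k + 1)).verts = (walkSubgraph G v (2 * k)).verts := by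
  ext u
  simp only [mem_walkSubgraph_verts_iff]
  exact and_congr_right fun _ => by omega

theorem dist_eq_of_walkSubgraph_adj_of_not_adj {k : ℕ} {i j : V}
    (hL : (walkSubgraph G v (2 * k + 1)).Adj i j) (hD : ¬(walkSubgraph G v (2 * k)).Adj i j) :
    G.dist v i = k ∧ G.dist v j = k := by
  obtain ⟨hadj, hi, hj, hle⟩ := walkSubgraph_adj_iff.mp hL
  have hgt : ¬G.dist v i + G.dist v j + 1 ≤ 2 * k := fun h =>
    hD (walkSubgraph_adj_iff.mpr ⟨hadj, hi, hj, h⟩)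
  rcases hadj.diff_dist_adj (u := v) with h | h | h <;> omega

end SimpleGraph

open SimpleGraph in
theorem distanceDetermined_between_D_L_general
    {V : Type*} (G : SimpleGraph V) (v : V) (k : ℕ)
    (H : G.Subgraph) (hdd : DistanceDetermined H v)
    (hD : walkSubgraph G v (2 * k) ≤ H) (hL : H ≤ walkSubgraph G v (2 * k + 1)) :
    H = walkSubgraph G v (2 * k) ∨ H = walkSubgraph G v (2 * k + 1) := by
  obtain ⟨-, P, -, -, hedge⟩ := hdd
  have hextra : ∀ i j, (walkSubgraph G v (2 * k + 1)).Adj i j →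
      ¬(walkSubgraph G v (2 * k)).Adj i j → (H.Adj i j ↔ P k k) := by
    intro i j hLij hDij
    obtain ⟨hi, hj⟩ := dist_eq_of_walkSubgraph_adj_of_not_adj hLij hDij
    rw [hedge i j hLij.adj_sub, hi, hj]
  refine Subgraph.eq_or_eq_of_le_of_le hD hL (walkSubgraph_verts_two_mul_add_one k).subset ?_
  by_cases hP : P k k
  · exact .inl fun i j hLij hDij => (hextra i j hLij hDij).mpr hP
  · exact .inr fun i j hLij hDij => mt (hextra i j hLij hDij).mp hP

/-- If a subgraph `H` of `G` is distance-determined from `v` and satisfies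
`D_k(v) ≤ H ≤ L_k(v)`, then `H = D_k(v)` or `H = L_k(v)`. -/
theorem distanceDetermined_between_D_L
    {V : Type*} (G : SimpleGraph V) (v : V) (k : ℕ) (hk : 1 ≤ k)
    (H : G.Subgraph) (hdd : DistanceDetermined H v)
    (hD : walkSubgraph G v (2 * k) ≤ H) (hL : H ≤ walkSubgraph G v (2 * k + 1)) :
    H = walkSubgraph G v (2 * k) ∨ H = walkSubgraph G v (2 * k + 1) :=
  distanceDetermined_between_D_L_general G v k H hdd hD hL
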